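/- For all natural numbers k and d with k ≥ 3 and d ≤ k, one has C(k − ⌊(d+1)/2⌋, k − d) + C(k − ⌊(d+2)/2⌋, k − d) ≤ F_{k+1}, where F_{k+1} is the (k+1)-st Fibonacci number. -/
import Mathlib

private lemma pascal_even (e m : ℕ) :
    Nat.choose (m + e + 2) (m + 1) + Nat.choose (m + e + 1) (m + 1)
      = (Nat.choose (m + e + 1) m + Nat.choose (m + e) m)
        + (Nat.choose (m + e + 1) (m + 1) + Nat.choose (m + e) (m + 1)) := by
  have h1 : Nat.choose (m + e + 2) (m + 1) =
      Nat.choose (m + e + 1) m + Nat.choose (m + e + 1) (m + 1) :=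
    Nat.choose_succ_succ (m + e + 1) m
  have h2 : Nat.choose (m + e + 1) (m + 1) =
      Nat.choose (m + e) m + Nat.choose (m + e) (m + 1) :=
    Nat.choose_succ_succ (m + e) m
  omega

private lemma pascal_odd (e m : ℕ) :
    Nat.choose (m + e + 2) (m + 1) + Nat.choose (m + e + 2) (m + 1)
      = (Nat.choose (m + e + 1) m + Nat.choose (m + e + 1) m)
        + (Nat.choose (m + e + 1) (m + 1) + Nat.choose (m + e + 1) (m + 1)) := by
  have h1 : Nat.choose (m + e + 2) (m + 1) =
      Nat.choose (m + e + 1) m + Nat.choose (m + e + 1) (m + 1) :=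
    Nat.choose_succ_succ (m + e + 1) m
  omega

set_option maxHeartbeats 1000000 in
/-- McMullen's upper bound (dual form) on the number of vertices of a
`d`-dimensional polytope with `k` facets is at most the `(k+1)`-st Fibonacci
number, for `3 ≤ k` and `d ≤ k`. -/
theorem mcmullen_bound_le_fib (k d : ℕ) (hk : 3 ≤ k) (hd : d ≤ k) :
    Nat.choose (k - (d + 1) / 2) (k - d) + Nat.choose (k - (d + 2) / 2) (k - d)
      ≤ Nat.fib (k + 1) := by
  induction k using Nat.strong_induction_on generalizing d with
  | _ k ih =>
  have hfib3 : 3 ≤ Nat.fib (k + 1) := by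
    calc 3 = Nat.fib 4 := rfl
    _ ≤ Nat.fib (k + 1) := Nat.fib_mono (by omega)
  -- trivial small-d and d = k cases
  rcases Nat.lt_or_ge d 2 with hd2 | hd2
  · interval_cases d
    · have h1 : k - (0 + 1) / 2 = k := by omega
      have h2 : k - (0 + 2) / 2 = k - 1 := by omega
      rw [h1, h2, Nat.choose_self, Nat.choose_eq_zero_of_lt (by omega)]
      omega
    · have h1 : k - (1 + 1) / 2 = k - 1 := by omega
      have h2 : k - (1 + 2) / 2 = k - 1 := by omega
      rw [h1, h2, Nat.choose_self]
      omega
  rcases Nat.eq_or_lt_of_le hd with hdk | hdk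
  · subst hdk
    have h1 : d - (d + 1) / 2 = d - (d + 1) / 2 := rfl
    rw [Nat.sub_self, Nat.choose_zero_right, Nat.choose_zero_right]
    omega
  -- now 2 ≤ d < k
  rcases Nat.lt_or_ge k 5 with hk5 | hk5
  · interval_cases k <;> interval_cases d <;> decide
  -- k ≥ 5 : use the recurrence
  have ih1 := ih (k - 1) (by omega) d (by omega) (by omega)
  have ih2 := ih (k - 2) (by omega) (d - 2) (by omega) (by omega)
  have e1 : k - 1 + 1 = k := by omega
  have e2 : k - 2 + 1 = k - 1 := by omega
  rw [e1] at ih1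
  rw [e2] at ih2
  have hfib : Nat.fib (k + 1) = Nat.fib k + Nat.fib (k - 1) := by
    have h : k + 1 = (k - 1) + 2 := by omega
    rw [h, Nat.fib_add_two, e1]
    omega
  rw [hfib]
  rcases Nat.even_or_odd d with ⟨e', he⟩ | ⟨e', he⟩
  · -- d = 2e' = 2(e+1) with e' ≥ 1
    obtain ⟨e, m, hke, hde⟩ : ∃ e m, k = m + 2 * e + 3 ∧ d = 2 * e + 2 :=
      ⟨e' - 1, k - d - 1, by omega, by omega⟩
    subst hke hde
    have g1 : m + 2 * e + 3 - (2 * e + 2 + 1) / 2 = m + e + 2 := by omega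
    have g2 : m + 2 * e + 3 - (2 * e + 2 + 2) / 2 = m + e + 1 := by omega
    have g3 : m + 2 * e + 3 - (2 * e + 2) = m + 1 := by omega
    rw [g1, g2, g3]
    have h1 : m + 2 * e + 3 - 1 - (2 * e + 2 + 1) / 2 = m + e + 1 := by omega
    have h2 : m + 2 * e + 3 - 1 - (2 * e + 2 + 2) / 2 = m + e := by omega
    have h3 : m + 2 * e + 3 - 1 - (2 * e + 2) = m := by omega
    rw [h1, h2, h3] at ih1
    have j1 : m + 2 * e + 3 - 2 - (2 * e + 2 - 2 + 1) / 2 = m + e + 1 := by omega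
    have j2 : m + 2 * e + 3 - 2 - (2 * e + 2 - 2 + 2) / 2 = m + e := by omega
    have j3 : m + 2 * e + 3 - 2 - (2 * e + 2 - 2) = m + 1 := by omega
    rw [j1, j2, j3] at ih2
    have := pascal_even e m
    omega
  · -- d = 2e' + 1 = 2(e+1) + 1 with e' ≥ 1
    obtain ⟨e, m, hke, hde⟩ : ∃ e m, k = m + 2 * e + 4 ∧ d = 2 * e + 3 :=
      ⟨e' - 1, k - d - 1, by omega, by omega⟩
    subst hke hde
    have g1 : m + 2 * e + 4 - (2 * e + 3 + 1) / 2 = m + e + 2 := by omega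
    have g2 : m + 2 * e + 4 - (2 * e + 3 + 2) / 2 = m + e + 2 := by omega
    have g3 : m + 2 * e + 4 - (2 * e + 3) = m + 1 := by omega
    rw [g1, g2, g3]
    have h1 : m + 2 * e + 4 - 1 - (2 * e + 3 + 1) / 2 = m + e + 1 := by omega
    have h2 : m + 2 * e + 4 - 1 - (2 * e + 3 + 2) / 2 = m + e + 1 := by omega
    have h3 : m + 2 * e + 4 - 1 - (2 * e + 3) = m := by omega
    rw [h1, h2, h3] at ih1
    have j1 : m + 2 * e + 4 - 2 - (2 * e + 3 - 2 + 1) / 2 = m + e + 1 := by omega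
    have j2 : m + 2 * e + 4 - 2 - (2 * e + 3 - 2 + 2) / 2 = m + e + 1 := by omega
    have j3 : m + 2 * e + 4 - 2 - (2 * e + 3 - 2) = m + 1 := by omega
    rw [j1, j2, j3] at ih2
    have := pascal_odd e m
    omega
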